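/- arXiv:1304.1381 — 2 statements merged into one kernel-verified Lean document; each statement's English description precedes it below -/
import Mathlib

section
/- Let (K(a)|K,v) be an extension of henselian valued fields, where a is an element of the separable-algebraic closure of K with va ≥ 0. Then va ≤ kras(a,K), and for every polynomial f = d_m X^m + ... + d_0 ∈ K[X] of degree m < [K(a):K], one has v f(a) ≤ v d_m + m·kras(a,K). -/
/-! Common definitions for formalizing Blaszczok–Kuhlmann,
"Algebraic independence of elements in immediate extensions of valued fields". -/

universe u

namespace ValuedExt

variable {Γ : Type*} [LinearOrderedCommGroupWithZero Γ]

/-- The value group `vK` of a valued field `(K,v)`, as a subgroup of the units of `Γ`. -/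
def valGroup {K : Type*} [Field K] (v : Valuation K Γ) : Subgroup Γˣ :=
  (Units.map v.toMonoidWithZeroHom.toMonoidHom).range

/-- An extension `(L|K,v)` of valued fields (along the embedding `f`) is immediate if the
canonical embedding of value groups and the canonical embedding of residue fields are onto.
Expressed elementwise: every value of `L` is a value of `K`, and every residue of `L` is the
residue of an element of `K`. -/
def IsImmediate {K L : Type*} [Field K] [Field L] (f : K →+* L) (v : Valuation L Γ) : Prop :=
  (∀ x : L, x ≠ 0 → ∃ y : K, v (f y) = v x) ∧
  (∀ x : L, v x ≤ 1 → ∃ y : K, v (x - f y) < 1)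

/-- A valued field `(K,v)` is maximal if it admits no proper immediate extension. -/
def IsMaximalField {K : Type u} [Field K] (v : Valuation K Γ) : Prop :=
  ∀ (L : Type u) [Field L] (f : K →+* L) (w : Valuation L Γ),
    w.comap f = v → IsImmediate f w → Function.Surjective f

/-- The residue field `Kv` of a valued field `(K,v)`. -/
abbrev resField {K : Type*} [Field K] (v : Valuation K Γ) : Type _ :=
  IsLocalRing.ResidueField ↥v.valuationSubring

/-- The embedding of valuation rings induced by an embedding of valued fields. -/
def integerMap {K L : Type*} [Field K] [Field L] (f : K →+* L) (v : Valuation L Γ) :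
    ↥(v.comap f).valuationSubring →+* ↥v.valuationSubring where
  toFun x := ⟨f x.1, x.2⟩
  map_one' := Subtype.ext (map_one f)
  map_mul' x y := Subtype.ext (map_mul f x.1 y.1)
  map_zero' := Subtype.ext (map_zero f)
  map_add' x y := Subtype.ext (map_add f x.1 y.1)

instance integerMap_isLocalHom {K L : Type*} [Field K] [Field L] (f : K →+* L)
    (v : Valuation L Γ) : IsLocalHom (integerMap f v) := by
  constructor
  intro a ha
  obtain ⟨u, hu⟩ := ha
  have hval : v (f a.1) = 1 := by
    have h1 : v ((u : ↥v.valuationSubring) : L) * v (((u⁻¹ : _) : ↥v.valuationSubring) : L)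
        = 1 := by
      rw [← Valuation.map_mul]
      norm_cast
      rw [mul_inv_cancel]
      exact v.map_one
    have hle : v ((u : ↥v.valuationSubring) : L) ≤ 1 := (u : ↥v.valuationSubring).2
    have hle' : v (((u⁻¹ : _) : ↥v.valuationSubring) : L) ≤ 1 :=
      ((u⁻¹ : (↥v.valuationSubring)ˣ) : ↥v.valuationSubring).2
    have hx : v ((u : ↥v.valuationSubring) : L) = 1 := by
      rcases lt_or_eq_of_le hle with hlt | heq
      · exfalso
        have : v ((u : ↥v.valuationSubring) : L) * v (((u⁻¹ : _) : ↥v.valuationSubring) : L)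
            < 1 := by
          calc v _ * v _ ≤ v ((u : ↥v.valuationSubring) : L) * 1 := by
                gcongr
            _ = v ((u : ↥v.valuationSubring) : L) := mul_one _
            _ < 1 := hlt
        rw [h1] at this
        exact lt_irrefl _ this
      · exact heq
    have : ((u : ↥v.valuationSubring) : L) = f a.1 := by
      rw [hu]; rfl
    rw [← this]
    exact hx
  have ha0 : a.1 ≠ 0 := by
    intro h0
    rw [h0, map_zero, Valuation.map_zero] at hval
    exact zero_ne_one hval
  have hinvmem : (a.1)⁻¹ ∈ (v.comap f).valuationSubring := by
    rw [Valuation.mem_valuationSubring_iff, map_inv₀]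
    show (v (f a.1))⁻¹ ≤ 1
    rw [hval, inv_one]
  refine IsUnit.of_mul_eq_one (a := a) ⟨(a.1)⁻¹, hinvmem⟩ ?_
  exact Subtype.ext (mul_inv_cancel₀ ha0)

/-- The embedding of residue fields induced by an embedding of valued fields. -/
noncomputable def residueMap {K L : Type*} [Field K] [Field L] (f : K →+* L)
    (v : Valuation L Γ) : resField (v.comap f) →+* resField v :=
  IsLocalRing.ResidueField.map (integerMap f v)

/-- The transcendence degree of a field extension given by an embedding `f`. -/
noncomputable def trdeg {K L : Type*} [Field K] [Field L] (f : K →+* L) : Cardinal :=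
  letI : Algebra K L := f.toAlgebra
  ⨆ s : {s : Set L // AlgebraicIndependent K ((↑) : s → L)}, Cardinal.mk s.1

/-- The characteristic exponent of a field: `p` if the characteristic is `p > 0`, and `1` if the
characteristic is `0`. -/
noncomputable def charExponent (R : Type*) [CommSemiring R] : ℕ := max (ringChar R) 1

/-- A valued field `(K,v)` is henselian if `v` extends uniquely (up to equivalence) to the
algebraic closure of `K`. -/
def IsHenselian {K : Type u} [Field K] {Γ' : Type*} [LinearOrderedCommGroupWithZero Γ']
    (v : Valuation K Γ') : Prop :=
  ∀ (Γ₁ Γ₂ : Type u) [LinearOrderedCommGroupWithZero Γ₁] [LinearOrderedCommGroupWithZero Γ₂]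
    (w₁ : Valuation (AlgebraicClosure K) Γ₁) (w₂ : Valuation (AlgebraicClosure K) Γ₂),
    (w₁.comap (algebraMap K (AlgebraicClosure K))).IsEquiv v →
    (w₂.comap (algebraMap K (AlgebraicClosure K))).IsEquiv v →
    w₁.IsEquiv w₂

/-- The subfield `F^p` of `p`-th powers of a field `F` (as the subfield generated by the `p`-th
powers; in characteristic `p` it is exactly the set of `p`-th powers). -/
def pPowSubfield (F : Type*) [Field F] (p : ℕ) : Subfield F :=
  Subfield.closure (Set.range fun x : F => x ^ p)

/-- The degree `[F : F^p]`, as a cardinal. -/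
noncomputable def pDegreeRes (F : Type*) [Field F] (p : ℕ) : Cardinal :=
  Module.rank ↥(pPowSubfield F p) F

/-- The subgroup `p·G` of `p`-th powers (multiplicatively) of a subgroup `G` of `Γˣ`. -/
def pMulSubgroup {G : Type*} [CommGroup G] (H : Subgroup G) (p : ℕ) : Subgroup G :=
  H.map (powMonoidHom p)

/-- The cardinality of the quotient `H/N` (of the subgroup `N ⊓ H` in `H`). -/
noncomputable def quotCard {G : Type*} [CommGroup G] (H N : Subgroup G) : Cardinal :=
  Cardinal.mk (↥H ⧸ N.subgroupOf H)

/-- The index `(vK : p·vK)` for the value group of a valuation, as a cardinal. -/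
noncomputable def pIndexVal {K : Type*} [Field K] (v : Valuation K Γ) (p : ℕ) : Cardinal :=
  quotCard (valGroup v) (pMulSubgroup (valGroup v) p)

/-- The field `K^{1/p}` of `p`-th roots of elements of `K`, inside a fixed algebraic closure. -/
noncomputable def pRootField (K : Type u) [Field K] (p : ℕ) [Fact p.Prime] [CharP K p] :
    Subfield (AlgebraicClosure K) :=
  Subfield.comap (frobenius (AlgebraicClosure K) p)
    (algebraMap K (AlgebraicClosure K)).fieldRange

/-- The canonical embedding `K → K^{1/p}`. -/
noncomputable def pRootEmb (K : Type u) [Field K] (p : ℕ) [Fact p.Prime] [CharP K p] :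
    K →+* ↥(pRootField K p) where
  toFun x := ⟨algebraMap K (AlgebraicClosure K) x, by
    rw [pRootField, Subfield.mem_comap]
    exact ⟨x ^ p, by rw [map_pow]; rfl⟩⟩
  map_one' := Subtype.ext (map_one _)
  map_mul' x y := Subtype.ext (map_mul _ x y)
  map_zero' := Subtype.ext (map_zero _)
  map_add' x y := Subtype.ext (map_add _ x y)

section Aux

variable {Γ : Type*} [LinearOrderedCommGroupWithZero Γ] {K : Type u} [Field K]

/-- In a multiset where every value of `g` is at least `γ`, the product of the values
is at least `γ ^ card`. -/
theorem pow_card_le_prod_aux {α : Type*} (s : Multiset α) (g : α → Γ) (γ : Γ)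
    (h : ∀ b ∈ s, γ ≤ g b) : γ ^ Multiset.card s ≤ (s.map g).prod := by
  induction s using Multiset.induction with
  | empty => simp
  | cons x s ih =>
    simp only [Multiset.map_cons, Multiset.prod_cons, Multiset.card_cons, pow_succ']
    exact mul_le_mul' (h x (Multiset.mem_cons_self x s))
      (ih fun b hb => h b (Multiset.mem_cons_of_mem hb))

/-- If `(K,v)` is henselian then any valuation on the algebraic closure is equivalent to its
composition with a `K`-automorphism. -/
theorem isEquiv_comap_algEquiv_aux (w : Valuation (AlgebraicClosure K) Γ)
    (hhens : IsHenselian (w.comap (algebraMap K (AlgebraicClosure K))))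
    (σ : AlgebraicClosure K ≃ₐ[K] AlgebraicClosure K) :
    w.IsEquiv (w.comap σ.toAlgHom.toRingHom) := by
  set L := AlgebraicClosure K
  set σR := σ.toAlgHom.toRingHom with hσR
  have h1 : w.IsEquiv w.valuationSubring.valuation :=
    Valuation.isEquiv_valuation_valuationSubring w
  have h2 : (w.comap σR).IsEquiv (w.comap σR).valuationSubring.valuation :=
    Valuation.isEquiv_valuation_valuationSubring _
  have hcomp : (w.comap σR).comap (algebraMap K L) = w.comap (algebraMap K L) := by
    rw [← Valuation.comap_comp]
    congr 1
    exact σ.toAlgHom.comp_algebraMap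
  have key := hhens _ _ w.valuationSubring.valuation (w.comap σR).valuationSubring.valuation
    (h1.symm.comap (algebraMap K L))
    (by
      have := h2.symm.comap (algebraMap K L)
      rwa [hcomp] at this)
  exact h1.trans (key.trans h2.symm)

/-- Every element of the algebraic closure is periodic under any automorphism. -/
theorem exists_pow_fix_aux (σ : AlgebraicClosure K ≃ₐ[K] AlgebraicClosure K)
    (x : AlgebraicClosure K) : ∃ k : ℕ, 0 < k ∧ (σ ^ k) x = x := by
  have hx : IsIntegral K x := (Algebra.IsAlgebraic.isAlgebraic x).isIntegral
  set p := minpoly K x with hp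
  have hp0 : p ≠ 0 := minpoly.ne_zero hx
  have hroot : ∀ n : ℕ, (σ ^ n) x ∈ p.rootSet (AlgebraicClosure K) := by
    intro n
    rw [Polynomial.mem_rootSet]
    refine ⟨hp0, ?_⟩
    rw [Polynomial.aeval_algHom_apply (σ ^ n : AlgebraicClosure K ≃ₐ[K] AlgebraicClosure K), minpoly.aeval, map_zero]
  obtain ⟨i, j, hne, heq⟩ := Finite.exists_ne_map_eq_of_infinite
    (fun n : ℕ => (⟨(σ ^ n) x, hroot n⟩ : p.rootSet (AlgebraicClosure K)))
  have heq' : (σ ^ i) x = (σ ^ j) x := congrArg Subtype.val heq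
  rcases hne.lt_or_gt with hij | hij
  · refine ⟨j - i, by omega, ?_⟩
    have : (σ ^ i) ((σ ^ (j - i)) x) = (σ ^ i) x := by
      rw [← AlgEquiv.mul_apply, ← pow_add, Nat.add_sub_cancel' hij.le, ← heq']
    exact (σ ^ i).injective this
  · refine ⟨i - j, by omega, ?_⟩
    have : (σ ^ j) ((σ ^ (i - j)) x) = (σ ^ j) x := by
      rw [← AlgEquiv.mul_apply, ← pow_add, Nat.add_sub_cancel' hij.le, heq']
    exact (σ ^ j).injective this

/-- Over a henselian field, automorphisms preserve the value. -/
theorem val_algEquiv_apply_aux (w : Valuation (AlgebraicClosure K) Γ)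
    (hhens : IsHenselian (w.comap (algebraMap K (AlgebraicClosure K))))
    (σ : AlgebraicClosure K ≃ₐ[K] AlgebraicClosure K) (x : AlgebraicClosure K) :
    w (σ x) = w x := by
  have key : ∀ τ : AlgebraicClosure K ≃ₐ[K] AlgebraicClosure K, ∀ y : AlgebraicClosure K,
      ¬ w (τ y) < w y := by
    intro τ y hlt
    have he := isEquiv_comap_algEquiv_aux w hhens τ
    have hstep : ∀ n : ℕ, w ((τ ^ (n + 1)) y) < w ((τ ^ n) y) := by
      intro n
      induction n with
      | zero => simpa using hlt
      | succ n ih =>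
        have h2 := he.lt_iff_lt.mp ih
        simp only [Valuation.comap_apply] at h2
        have e1 : (τ ^ (n + 2)) y = τ.toAlgHom.toRingHom ((τ ^ (n + 1)) y) := by
          rw [pow_succ']
          rfl
        have e2 : (τ ^ (n + 1)) y = τ.toAlgHom.toRingHom ((τ ^ n) y) := by
          rw [pow_succ']
          rfl
        rw [e1]
        conv_rhs => rw [e2]
        exact h2
    have hdesc : ∀ n : ℕ, w ((τ ^ (n + 1)) y) < w y := by
      intro n
      induction n with
      | zero => simpa using hstep 0
      | succ n ih => exact (hstep (n + 1)).trans ih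
    obtain ⟨k, hk, hfix⟩ := exists_pow_fix_aux τ y
    obtain ⟨m, rfl⟩ : ∃ m, k = m + 1 := ⟨k - 1, by omega⟩
    have := hdesc m
    rw [hfix] at this
    exact lt_irrefl _ this
  rcases lt_trichotomy (w (σ x)) (w x) with h | h | h
  · exact absurd h (key σ x)
  · exact h
  · exfalso
    refine key σ.symm (σ x) ?_
    rw [AlgEquiv.symm_apply_apply]
    exact h

end Aux

/-- bounds in terms of the Krasner constant. The valuation is multiplicative,
so the additive statements `va ≥ 0`, `va ≤ kras(a,K)` and
`v f(a) ≤ v d_m + m·kras(a,K)` become `w a ≤ 1`, `γ ≤ w a` and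
`w (d_m) * γ ^ m ≤ w (f(a))`, where `γ` is the (multiplicative) Krasner constant, i.e. the
minimum of the values `w (τ a - σ a)` over `σ, τ` in the Galois group with `τ a ≠ σ a`. -/
theorem val_le_krasner_and_val_poly_le
    {Γ : Type*} [LinearOrderedCommGroupWithZero Γ]
    {K : Type u} [Field K]
    (w : Valuation (AlgebraicClosure K) Γ)
    (hhens : IsHenselian (w.comap (algebraMap K (AlgebraicClosure K))))
    (a : AlgebraicClosure K)
    (hsep : IsSeparable K a)
    (hnotinsep : a ∉ (algebraMap K (AlgebraicClosure K)).fieldRange)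
    (hint : w a ≤ 1)
    (γ : Γ)
    (hγle : ∀ σ τ : AlgebraicClosure K ≃ₐ[K] AlgebraicClosure K,
      τ a ≠ σ a → γ ≤ w (τ a - σ a))
    (hγmem : ∃ σ τ : AlgebraicClosure K ≃ₐ[K] AlgebraicClosure K,
      τ a ≠ σ a ∧ w (τ a - σ a) = γ) :
    γ ≤ w a ∧
    ∀ f : Polynomial K,
      f.natDegree < Module.finrank K (↥(IntermediateField.adjoin K {a})) →
      w (algebraMap K (AlgebraicClosure K) f.leadingCoeff) * γ ^ f.natDegree ≤
        w (Polynomial.aeval a f) := by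
  classical
  have hvaleq := val_algEquiv_apply_aux w hhens
  have hainteg : IsIntegral K a := (Algebra.IsAlgebraic.isAlgebraic a).isIntegral
  constructor
  · obtain ⟨σ, τ, hne, heq⟩ := hγmem
    calc γ = w (τ a - σ a) := heq.symm
      _ ≤ max (w (τ a)) (w (σ a)) := w.map_sub _ _
      _ = w a := by rw [hvaleq τ, hvaleq σ, max_self]
  · intro f hdeg
    by_cases hf : f = 0
    · simp [hf]
    -- every root of f is at distance at least γ from a
    have hroots : ∀ b ∈ f.rootSet (AlgebraicClosure K), γ ≤ w (a - b) := by
      by_contra hcon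
      push_neg at hcon
      obtain ⟨b, hb, hlt⟩ := hcon
      have hchoice : ∀ r : (minpoly K a).rootSet (AlgebraicClosure K),
          ∃ σ : AlgebraicClosure K ≃ₐ[K] AlgebraicClosure K, σ a = (r : AlgebraicClosure K) := by
        intro r
        have hr := (Polynomial.mem_rootSet.mp r.2).2
        exact minpoly.exists_algEquiv_of_root' (Algebra.IsAlgebraic.isAlgebraic a) hr
      choose sig hsig using hchoice
      have hmapped : ∀ r : (minpoly K a).rootSet (AlgebraicClosure K),
          sig r b ∈ f.rootSet (AlgebraicClosure K) := by
        intro r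
        rw [Polynomial.mem_rootSet]
        refine ⟨hf, ?_⟩
        have hb0 : Polynomial.aeval b f = 0 := (Polynomial.mem_rootSet.mp hb).2
        rw [Polynomial.aeval_algHom_apply (sig r), hb0, map_zero]
      have hinj : Function.Injective
          (fun r : (minpoly K a).rootSet (AlgebraicClosure K) =>
            (⟨sig r b, hmapped r⟩ : f.rootSet (AlgebraicClosure K))) := by
        intro r₁ r₂ h12
        have hbb : sig r₁ b = sig r₂ b := congrArg Subtype.val h12
        by_contra hne
        have hne' : sig r₁ a ≠ sig r₂ a := by
          rw [hsig r₁, hsig r₂]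
          exact fun h => hne (Subtype.ext h)
        have hge : γ ≤ w (sig r₁ a - sig r₂ a) := hγle (sig r₂) (sig r₁) hne'
        have hdiff : sig r₁ a - sig r₂ a = sig r₁ (a - b) - sig r₂ (a - b) := by
          rw [map_sub, map_sub, hbb]
          ring
        have hlt' : w (sig r₁ a - sig r₂ a) < γ := by
          rw [hdiff]
          calc w (sig r₁ (a - b) - sig r₂ (a - b))
              ≤ max (w (sig r₁ (a - b))) (w (sig r₂ (a - b))) := w.map_sub _ _
            _ = w (a - b) := by rw [hvaleq (sig r₁), hvaleq (sig r₂), max_self]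
            _ < γ := hlt
        exact absurd hge (not_le.mpr hlt')
      have hcard1 : Fintype.card ((minpoly K a).rootSet (AlgebraicClosure K))
          = (minpoly K a).natDegree :=
        Polynomial.card_rootSet_eq_natDegree hsep (IsAlgClosed.splits _)
      have hcard2 : Fintype.card (f.rootSet (AlgebraicClosure K)) ≤ f.natDegree := by
        simp_rw [Polynomial.rootSet_def, Finset.coe_sort_coe, Fintype.card_coe]
        calc (f.aroots (AlgebraicClosure K)).toFinset.card
            ≤ Multiset.card (f.aroots (AlgebraicClosure K)) := Multiset.toFinset_card_le _
          _ ≤ (f.map (algebraMap K (AlgebraicClosure K))).natDegree := Polynomial.card_roots' _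
          _ = f.natDegree := Polynomial.natDegree_map _
      have hfin : Module.finrank K (↥(IntermediateField.adjoin K {a}))
          = (minpoly K a).natDegree := IntermediateField.adjoin.finrank hainteg
      have hle := Fintype.card_le_of_injective _ hinj
      rw [hcard1] at hle
      have := lt_of_le_of_lt (hle.trans hcard2) hdeg
      rw [hfin] at this
      exact lt_irrefl _ this
    -- now the valuation computation
    have hF0 : f.map (algebraMap K (AlgebraicClosure K)) ≠ 0 := Polynomial.map_ne_zero hf
    have hsplit : (f.map (algebraMap K (AlgebraicClosure K))).Splits :=
      IsAlgClosed.splits _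
    have heqF : f.map (algebraMap K (AlgebraicClosure K))
        = Polynomial.C (f.map (algebraMap K (AlgebraicClosure K))).leadingCoeff
        * ((f.map (algebraMap K (AlgebraicClosure K))).roots.map
            fun r => Polynomial.X - Polynomial.C r).prod :=
      hsplit.eq_prod_roots
    have heval : Polynomial.aeval a f
        = (f.map (algebraMap K (AlgebraicClosure K))).leadingCoeff
          * ((f.map (algebraMap K (AlgebraicClosure K))).roots.map fun r => a - r).prod := by
      rw [Polynomial.aeval_def, ← Polynomial.eval_map]
      conv_lhs => rw [heqF]
      rw [Polynomial.eval_mul, Polynomial.eval_C, Polynomial.eval_multiset_prod,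
        Multiset.map_map]
      congr 2
      ext r
      simp
    have hlc : (f.map (algebraMap K (AlgebraicClosure K))).leadingCoeff
        = algebraMap K (AlgebraicClosure K) f.leadingCoeff :=
      Polynomial.leadingCoeff_map (algebraMap K (AlgebraicClosure K))
    have hcardroots : Multiset.card (f.map (algebraMap K (AlgebraicClosure K))).roots
        = f.natDegree := by
      rw [Polynomial.splits_iff_card_roots.mp hsplit, Polynomial.natDegree_map]
    have hprodge : γ ^ f.natDegree
        ≤ ((f.map (algebraMap K (AlgebraicClosure K))).roots.map fun r => w (a - r)).prod := by
      rw [← hcardroots]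
      refine pow_card_le_prod_aux _ _ _ ?_
      intro r hr
      refine hroots r ?_
      rw [Polynomial.mem_rootSet]
      refine ⟨hf, ?_⟩
      have h0 := Polynomial.isRoot_of_mem_roots hr
      rwa [Polynomial.IsRoot, Polynomial.eval_map, ← Polynomial.aeval_def] at h0
    have hwval : w (Polynomial.aeval a f)
        = w (algebraMap K (AlgebraicClosure K) f.leadingCoeff)
          * ((f.map (algebraMap K (AlgebraicClosure K))).roots.map fun r => w (a - r)).prod := by
      rw [heval, hlc, map_mul, map_multiset_prod, Multiset.map_map]
      rfl
    rw [hwval]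
    exact mul_le_mul_right hprodge _

end ValuedExt
end

section
/- Let (K,v) be a henselian valued field of positive characteristic p, and let (a_ν)_{ν<λ} be a pseudo Cauchy sequence in (K,v) without a pseudo limit in K. If (K(a)|K,v) is a valued field extension of degree p such that a is a pseudo limit of (a_ν)_{ν<λ}, then the extension (K(a)|K,v) is immediate. -/
/-! Common definitions for formalizing Blaszczok–Kuhlmann,
"Algebraic independence of elements in immediate extensions of valued fields". -/

universe u

namespace ValuedExt

variable {Γ : Type*} [LinearOrderedCommGroupWithZero Γ]

section PCS
variable {Γ : Type*} [LinearOrderedCommGroupWithZero Γ]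
variable {M : Type*} [Field M] {ι : Type*} [LinearOrder ι]
variable {w : Valuation M Γ} {b : ι → M} {γ : ι → Γ}

lemma val_sub_left {u u' : M} (w : Valuation M Γ) (h : w u' < w u) : w (u - u') = w u := by
  rw [sub_eq_add_neg, w.map_add_of_distinct_val (by rw [Valuation.map_neg]; exact h.ne'),
    Valuation.map_neg]
  exact sup_eq_left.mpr h.le

lemma val_sub_right {u u' : M} (w : Valuation M Γ) (h : w u < w u') : w (u - u') = w u' := by
  rw [← Valuation.map_neg, neg_sub]
  exact val_sub_left w h

/-- stability: the value of differences of a pcs depends only on the smaller index -/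
lemma pcs_diff_stable
    (hpc : ∀ ρ σ τ : ι, ρ < σ → σ < τ → w (b τ - b σ) < w (b σ - b ρ))
    {σ τ τ' : ι} (h1 : σ < τ) (h2 : σ < τ') :
    w (b τ' - b σ) = w (b τ - b σ) := by
  rcases lt_trichotomy τ τ' with h | rfl | h
  · have : b τ' - b σ = (b τ' - b τ) + (b τ - b σ) := by ring
    rw [this, w.map_add_of_distinct_val (hpc σ τ τ' h1 h).ne]
    exact sup_eq_right.mpr (hpc σ τ τ' h1 h).le
  · rfl
  · have : b τ - b σ = (b τ - b τ') + (b τ' - b σ) := by ring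
    rw [this, w.map_add_of_distinct_val (hpc σ τ' τ h2 h).ne,
      sup_eq_right.mpr (hpc σ τ' τ h2 h).le]

lemma gamma_anti (hγ : ∀ σ τ : ι, σ < τ → w (b τ - b σ) = γ σ)
    (hpc : ∀ ρ σ τ : ι, ρ < σ → σ < τ → w (b τ - b σ) < w (b σ - b ρ))
    (hnomax : ∀ i : ι, ∃ j, i < j) {σ τ : ι} (h : σ < τ) : γ τ < γ σ := by
  obtain ⟨τ', hτ'⟩ := hnomax τ
  rw [← hγ τ τ' hτ', ← hγ σ τ h]
  exact hpc σ τ τ' h hτ'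

lemma gamma_pos (hγ : ∀ σ τ : ι, σ < τ → w (b τ - b σ) = γ σ)
    (hpc : ∀ ρ σ τ : ι, ρ < σ → σ < τ → w (b τ - b σ) < w (b σ - b ρ))
    (hnomax : ∀ i : ι, ∃ j, i < j) (σ : ι) : 0 < γ σ := by
  obtain ⟨τ, hτ⟩ := hnomax σ
  exact lt_of_le_of_lt zero_le' (gamma_anti hγ hpc hnomax hτ)

/-- Dichotomy: every point is either a "pseudo limit" of the pcs (distances are exactly γ
on a tail) or has eventually constant distance δ with γ < δ on a tail. -/
lemma pcs_dichotomy [Nonempty ι]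
    (hγ : ∀ σ τ : ι, σ < τ → w (b τ - b σ) = γ σ)
    (hpc : ∀ ρ σ τ : ι, ρ < σ → σ < τ → w (b τ - b σ) < w (b σ - b ρ))
    (hnomax : ∀ i : ι, ∃ j, i < j) (z : M) :
    (∃ i₀, ∀ σ, i₀ ≤ σ → w (z - b σ) = γ σ) ∨
    (∃ i₀ δ, (∀ σ, i₀ ≤ σ → w (z - b σ) = δ) ∧ (∀ σ, i₀ ≤ σ → γ σ < δ)) := by
  by_cases h : ∀ σ, w (z - b σ) = γ σ
  · exact Or.inl ⟨Classical.arbitrary ι, fun σ _ => h σ⟩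
  push_neg at h
  obtain ⟨σ₀, hσ₀⟩ := h
  obtain ⟨τ₀, hτ₀⟩ := hnomax σ₀
  right
  rcases lt_or_gt_of_ne hσ₀ with hlt | hgt
  · refine ⟨τ₀, γ σ₀, fun σ hσ => ?_, fun σ hσ => ?_⟩
    · have hσ₀σ : σ₀ < σ := lt_of_lt_of_le hτ₀ hσ
      have : z - b σ = (z - b σ₀) - (b σ - b σ₀) := by ring
      rw [this, val_sub_right w (by rw [hγ σ₀ σ hσ₀σ]; exact hlt), hγ σ₀ σ hσ₀σ]
    · exact gamma_anti hγ hpc hnomax (lt_of_lt_of_le hτ₀ hσ)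
  · refine ⟨τ₀, w (z - b σ₀), fun σ hσ => ?_, fun σ hσ => ?_⟩
    · have hσ₀σ : σ₀ < σ := lt_of_lt_of_le hτ₀ hσ
      have : z - b σ = (z - b σ₀) - (b σ - b σ₀) := by ring
      rw [this, val_sub_left w (by rw [hγ σ₀ σ hσ₀σ]; exact hgt)]
    · exact lt_trans (gamma_anti hγ hpc hnomax (lt_of_lt_of_le hτ₀ hσ)) hgt

/-- If distances to z are eventually ≤ γ, then z is a pseudo limit. -/
lemma plim_of_le_gamma [Nonempty ι]
    (hγ : ∀ σ τ : ι, σ < τ → w (b τ - b σ) = γ σ)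
    (hpc : ∀ ρ σ τ : ι, ρ < σ → σ < τ → w (b τ - b σ) < w (b σ - b ρ))
    (hnomax : ∀ i : ι, ∃ j, i < j) {z : M} {i₁ : ι}
    (hle : ∀ σ, i₁ ≤ σ → w (z - b σ) ≤ γ σ) :
    ∃ i₀ : ι, ∀ σ τ : ι, i₀ ≤ σ → σ < τ → w (z - b τ) < w (z - b σ) := by
  rcases pcs_dichotomy hγ hpc hnomax z with ⟨i₀, h⟩ | ⟨i₀, δ, hδ, hδγ⟩
  · refine ⟨max i₀ i₁, fun σ τ hσ hστ => ?_⟩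
    have hσ' : i₀ ≤ σ := le_trans (le_max_left _ _) hσ
    rw [h σ hσ', h τ (le_trans hσ' hστ.le)]
    exact gamma_anti hγ hpc hnomax hστ
  · exfalso
    set σ := max i₀ i₁
    have h1 : w (z - b σ) = δ := hδ σ (le_max_left _ _)
    have h2 : γ σ < δ := hδγ σ (le_max_left _ _)
    have h3 : w (z - b σ) ≤ γ σ := hle σ (le_max_right _ _)
    rw [h1] at h3
    exact absurd h3 (not_le.mpr h2)

/-- A non-pseudolimit has eventually constant distance, strictly above the tail of γ. -/
lemma not_plim_const [Nonempty ι]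
    (hγ : ∀ σ τ : ι, σ < τ → w (b τ - b σ) = γ σ)
    (hpc : ∀ ρ σ τ : ι, ρ < σ → σ < τ → w (b τ - b σ) < w (b σ - b ρ))
    (hnomax : ∀ i : ι, ∃ j, i < j) {z : M}
    (hz : ¬ ∃ i₀ : ι, ∀ σ τ : ι, i₀ ≤ σ → σ < τ → w (z - b τ) < w (z - b σ)) :
    ∃ i₀ δ, (∀ σ, i₀ ≤ σ → w (z - b σ) = δ) ∧ (∀ σ, i₀ ≤ σ → γ σ < δ) := by
  rcases pcs_dichotomy hγ hpc hnomax z with ⟨i₀, h⟩ | hR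
  · exact absurd (plim_of_le_gamma hγ hpc hnomax (i₁ := i₀) (fun σ hσ => (h σ hσ).le)) hz
  · exact hR

end PCS

open Polynomial

section Helpers
variable {Γ : Type*} [LinearOrderedCommGroupWithZero Γ]

lemma eq_one_of_pow_eq_one {α : Γ} {n : ℕ} (hn : n ≠ 0) (h : α ^ n = 1) : α = 1 := by
  rcases lt_trichotomy α 1 with hlt | heq | hgt
  · have : α ^ n < 1 := pow_lt_one₀ zero_le' hlt hn
    rw [h] at this; exact absurd this (lt_irrefl 1)
  · exact heq
  · have : (1:Γ) < α ^ n := one_lt_pow₀ hgt hn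
    rw [h] at this; exact absurd this (lt_irrefl 1)

lemma pow_inj_of_ne_zero {α β : Γ} {n : ℕ} (hn : n ≠ 0) (hα : α ≠ 0) (hβ : β ≠ 0)
    (h : α ^ n = β ^ n) : α = β := by
  rcases lt_trichotomy α β with hlt | heq | hgt
  · have := pow_lt_pow_left₀ hlt zero_le' hn
    rw [h] at this; exact absurd this (lt_irrefl _)
  · exact heq
  · have := pow_lt_pow_left₀ hgt zero_le' hn
    rw [h] at this; exact absurd this (lt_irrefl _)

/-- value of a sum with a strictly dominant term -/
lemma val_sum_dominant {M : Type*} [Field M] (w : Valuation M Γ) {α : Type*}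
    {s : Finset α} {f : α → M} {k : α} (hk : k ∈ s)
    (hdom : ∀ i ∈ s, i ≠ k → w (f i) < w (f k)) :
    w (∑ i ∈ s, f i) = w (f k) := by
  classical
  rw [← Finset.add_sum_erase s f hk]
  rcases eq_or_ne (w (f k)) 0 with h0 | h0
  · have : ∀ i ∈ s.erase k, f i = 0 := by
      intro i hi
      have := hdom i (Finset.mem_of_mem_erase hi) (Finset.ne_of_mem_erase hi)
      rw [h0] at this
      exact absurd this (by simp)
    rw [Finset.sum_eq_zero this, add_zero]
  · have hrest : w (∑ i ∈ s.erase k, f i) < w (f k) := by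
      apply Valuation.map_sum_lt _ h0
      intro i hi
      exact hdom i (Finset.mem_of_mem_erase hi) (Finset.ne_of_mem_erase hi)
    rw [w.map_add_of_distinct_val hrest.ne', sup_eq_left.mpr hrest.le]

end Helpers

section Finsets
variable {ι : Type*} [LinearOrder ι]

lemma exists_ub_finset [Nonempty ι] (s : Finset ι) : ∃ j : ι, ∀ i ∈ s, i ≤ j := by
  rcases s.eq_empty_or_nonempty with rfl | hne
  · exact ⟨Classical.arbitrary ι, by simp⟩
  · exact ⟨s.max' hne, fun i hi => s.le_max' i hi⟩

lemma exists_gt_finset [Nonempty ι] (hnomax : ∀ i : ι, ∃ j, i < j) (s : Finset ι) :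
    ∃ j : ι, ∀ i ∈ s, i < j := by
  obtain ⟨j, hj⟩ := exists_ub_finset s
  obtain ⟨j', hj'⟩ := hnomax j
  exact ⟨j', fun i hi => lt_of_le_of_lt (hj i hi) hj'⟩

lemma exists_gt_finite [Nonempty ι] (hnomax : ∀ i : ι, ∃ j, i < j) {S : Set ι}
    (hS : S.Finite) : ∃ j : ι, ∀ i ∈ S, i < j := by
  obtain ⟨j, hj⟩ := exists_gt_finset hnomax hS.toFinset
  exact ⟨j, fun i hi => hj i (hS.mem_toFinset.mpr hi)⟩

end Finsets

section Poly
variable {K L : Type*} [Field K] [Field L]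

lemma hasseDeriv_map (φ : K →+* L) (k : ℕ) (g : K[X]) :
    hasseDeriv k (g.map φ) = (hasseDeriv k g).map φ := by
  ext n
  rw [hasseDeriv_coeff, coeff_map, coeff_map, hasseDeriv_coeff, map_mul, map_natCast]

end Poly

section Fixed

variable {K : Type*} [Field K]

/-- An element of the algebraic closure which is separable over `K` and fixed by all
`K`-automorphisms lies in (the image of) `K`. -/
lemma mem_range_of_separable_of_fixed [DecidableEq (AlgebraicClosure K)] {z : AlgebraicClosure K}
    (hsep : IsSeparable K z)
    (hfix : ∀ τ : (AlgebraicClosure K) ≃ₐ[K] (AlgebraicClosure K), τ z = z) :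
    z ∈ (algebraMap K (AlgebraicClosure K)).range := by
  have hint : IsIntegral K z := Algebra.IsIntegral.isIntegral z
  let Kb := AlgebraicClosure K
  let s := minpoly K z
  have hsplits : (s.map (algebraMap K Kb)).Splits := IsAlgClosed.splits _
  have hcard : s.natDegree = (s.map (algebraMap K Kb)).roots.card :=
    ((natDegree_map _).symm.trans hsplits.natDegree_eq_card_roots)
  have hnodup : (s.map (algebraMap K Kb)).roots.Nodup :=
    nodup_roots (Polynomial.Separable.map (hsep : s.Separable))
  have hroots : ∀ z' ∈ (s.map (algebraMap K Kb)).roots, z' = z := by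
    intro z' hz'
    have hz'root : aeval z' s = 0 := by
      have := isRoot_of_mem_roots hz'
      rwa [IsRoot, eval_map, ← aeval_def] at this
    obtain ⟨τ, hτ⟩ := minpoly.exists_algEquiv_of_root' (Algebra.IsAlgebraic.isAlgebraic z) hz'root
    rw [← hτ]
    exact hfix τ
  have hcard1 : Multiset.card (s.map (algebraMap K Kb)).roots ≤ 1 := by
    rw [← Multiset.toFinset_card_eq_card_iff_nodup.mpr hnodup]
    apply Finset.card_le_one.mpr
    intro a ha b hb
    rw [hroots a (Multiset.mem_toFinset.mp ha), hroots b (Multiset.mem_toFinset.mp hb)]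
  have : s.natDegree ≤ 1 := hcard ▸ hcard1
  have : s.natDegree = 1 := le_antisymm this (minpoly.natDegree_pos hint)
  exact minpoly.natDegree_eq_one_iff.mp this

end Fixed


/-- Any valuation on `K` extends (up to equivalence) to the algebraic closure of `K`. -/
lemma exists_extension_algClosure {Γ : Type*} [LinearOrderedCommGroupWithZero Γ]
    {K : Type u} [Field K] (vK : Valuation K Γ) :
    ∃ A : ValuationSubring (AlgebraicClosure K),
      (A.valuation.comap (algebraMap K (AlgebraicClosure K))).IsEquiv vK := by
  set Kb := AlgebraicClosure K
  set φ := algebraMap K Kb with hφ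
  set O := vK.valuationSubring
  obtain ⟨A, hA, hloc⟩ := IsLocalRing.exists_factor_valuationRing (φ.comp O.subtype)
  refine ⟨A, Valuation.isEquiv_iff_val_le_one.mpr ?_⟩
  intro c
  rw [Valuation.comap_apply, ValuationSubring.valuation_le_one_iff]
  constructor
  · intro hmem
    by_contra h
    push_neg at h
    have hc0 : c ≠ 0 := by
      rintro rfl
      simp at h
    have hcinv : c⁻¹ ∈ O := by
      rw [Valuation.mem_valuationSubring_iff, map_inv₀]
      exact inv_le_one_of_one_le₀ h.le
    set u : O := ⟨c⁻¹, hcinv⟩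
    have hunit : IsUnit ((φ.comp O.subtype).codRestrict A.toSubring hA u) := by
      apply isUnit_iff_exists_inv.mpr
      refine ⟨⟨φ c, hmem⟩, ?_⟩
      ext
      show φ c⁻¹ * φ c = 1
      rw [← map_mul, inv_mul_cancel₀ hc0, map_one]
    have := hloc.1 u hunit
    obtain ⟨w, hw⟩ := isUnit_iff_exists_inv.mp this
    have hcO : c ∈ O := by
      have : (c⁻¹ : K) * (w : K) = 1 := congrArg Subtype.val hw
      have hwc : (w : K) = c := ((inv_mul_eq_one₀ hc0).mp this).symm
      rw [← hwc]; exact w.2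
    rw [Valuation.mem_valuationSubring_iff] at hcO
    exact absurd hcO (not_le.mpr h)
  · intro hc
    exact hA ⟨c, hc⟩


section Taylor
open Polynomial

lemma taylor_expand {R : Type*} [CommRing R] (g : R[X]) (x y : R) :
    g.eval x = ∑ k ∈ Finset.range (g.natDegree + 1),
      (Polynomial.hasseDeriv k g).eval y * (x - y) ^ k := by
  conv_lhs => rw [← taylor_eval_sub y g x]
  rw [eval_eq_sum_range, natDegree_taylor]
  apply Finset.sum_congr rfl
  intro k _
  rw [taylor_coeff]

lemma taylor_diff {R : Type*} [CommRing R] (g : R[X]) (x y : R) :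
    g.eval x - g.eval y = ∑ k ∈ Finset.range g.natDegree,
      (Polynomial.hasseDeriv (k+1) g).eval y * (x - y) ^ (k+1) := by
  rw [taylor_expand g x y, Finset.sum_range_succ']
  simp only [hasseDeriv_zero, LinearMap.id_coe, id_eq, pow_zero, mul_one]
  rw [add_sub_cancel_right]

lemma taylor_diff_map {K L : Type*} [Field K] [Field L] (φ : K →+* L) (g : K[X]) (x : L) (c : K) :
    Polynomial.eval₂ φ x g - φ (g.eval c) = ∑ k ∈ Finset.range g.natDegree,
      φ ((Polynomial.hasseDeriv (k+1) g).eval c) * (x - φ c) ^ (k+1) := by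
  have h1 : Polynomial.eval₂ φ x g = (g.map φ).eval x := (eval_map φ x).symm
  have h2 : φ (g.eval c) = (g.map φ).eval (φ c) := by rw [eval_map, eval₂_hom]
  have hnd : (g.map φ).natDegree = g.natDegree := natDegree_map φ
  rw [h1, h2, taylor_diff (g.map φ) x (φ c), hnd]
  apply Finset.sum_congr rfl
  intro k _
  rw [hasseDeriv_map, eval_map, eval₂_hom]

end Taylor

lemma crux {Γ : Type*} [LinearOrderedCommGroupWithZero Γ]
    {K : Type u} [Field K] (p : ℕ) [Fact p.Prime] [CharP K p]
    (vK : Valuation K Γ)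
    (hhens : IsHenselian vK)
    {ι : Type*} [LinearOrder ι] [Nonempty ι] (hnomax : ∀ i : ι, ∃ j, i < j)
    (a : ι → K)
    (hpc : ∀ ρ σ τ : ι, ρ < σ → σ < τ → vK (a τ - a σ) < vK (a σ - a ρ))
    (hnolim : ¬ ∃ y : K, ∃ i₀ : ι, ∀ σ τ : ι, i₀ ≤ σ → σ < τ → vK (y - a τ) < vK (y - a σ))
    (g : Polynomial K) (hg0 : g ≠ 0) (hdegg : g.natDegree < p) :
    ∃ i₀ : ι, ∀ σ τ : ι, i₀ ≤ σ → i₀ ≤ τ → vK (g.eval (a σ)) = vK (g.eval (a τ)) := by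
  classical
  set Kb := AlgebraicClosure K with hKb
  set φ : K →+* Kb := algebraMap K Kb with hφ
  obtain ⟨A, hAeq⟩ := exists_extension_algClosure vK
  set w := A.valuation with hw
  -- transfer lemmas
  have hle : ∀ u u' : K, w (φ u) ≤ w (φ u') ↔ vK u ≤ vK u' := by
    intro u u'
    have := hAeq u u'
    rwa [Valuation.comap_apply, Valuation.comap_apply] at this
  have hlt : ∀ u u' : K, w (φ u) < w (φ u') ↔ vK u < vK u' := by
    intro u u'
    rw [lt_iff_not_ge, lt_iff_not_ge, hle]
  have heq : ∀ u u' : K, w (φ u) = w (φ u') ↔ vK u = vK u' := by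
    intro u u'
    rw [le_antisymm_iff, le_antisymm_iff, hle, hle]
  set b : ι → Kb := fun σ => φ (a σ) with hb
  have hpcb : ∀ ρ σ τ : ι, ρ < σ → σ < τ → w (b τ - b σ) < w (b σ - b ρ) := by
    intro ρ σ τ h1 h2
    rw [hb]
    simp only [← map_sub]
    exact (hlt _ _).mpr (hpc ρ σ τ h1 h2)
  choose nxt hnxt using hnomax
  set γ : ι → A.ValueGroup := fun σ => w (b (nxt σ) - b σ) with hγdef
  have hγ : ∀ σ τ : ι, σ < τ → w (b τ - b σ) = γ σ := by
    intro σ τ h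
    exact pcs_diff_stable hpcb (hnxt σ) h
  have hnomax' : ∀ i : ι, ∃ j, i < j := fun i => ⟨nxt i, hnxt i⟩
  -- factor g over Kb
  set gm := g.map φ with hgm
  have hgm0 : gm ≠ 0 := Polynomial.map_ne_zero hg0
  have heval : ∀ s : K, gm.eval (φ s) = φ (g.eval s) := by
    intro s
    rw [hgm, eval_map, eval₂_hom]
  have hfact : gm = C (φ g.leadingCoeff) * (gm.roots.map fun a => X - C a).prod := by
    rw [hgm]
    conv_lhs => rw [(IsAlgClosed.splits (g.map φ)).eq_prod_roots]
    rw [leadingCoeff_map]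
  have hvale : ∀ σ : ι, w (φ (g.eval (a σ)))
      = w (φ g.leadingCoeff) * (gm.roots.map (fun y => w (b σ - y))).prod := by
    intro σ
    rw [← heval]
    conv_lhs => rw [hfact]
    rw [eval_mul, eval_C, map_mul w, eval_multiset_prod]
    rw [Multiset.map_map, map_multiset_prod w, Multiset.map_map]
    have : Multiset.map (⇑w ∘ eval (φ (a σ)) ∘ fun a => X - C a) gm.roots
        = Multiset.map (fun y => w (b σ - y)) gm.roots := by
      apply Multiset.map_congr rfl
      intro y _
      simp [hb]
    rw [this]
  by_cases hex : ∃ y ∈ gm.roots, ∃ i₀, ∀ σ, i₀ ≤ σ → w (y - b σ) = γ σ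
  · -- a root is a pseudo limit: derive a contradiction
    exfalso
    obtain ⟨y, hyR, i₀y, hy⟩ := hex
    have hint : IsIntegral K y := Algebra.IsIntegral.isIntegral y
    have hyroot : (aeval y) g = 0 := by
      have := isRoot_of_mem_roots hyR
      rwa [IsRoot, hgm, eval_map, ← aeval_def] at this
    set s := minpoly K y with hs
    have hsdvd : s ∣ g := minpoly.dvd K y hyroot
    have hsdeg : s.natDegree < p := lt_of_le_of_lt (natDegree_le_of_dvd hsdvd hg0) hdegg
    have hs0 : 0 < s.natDegree := minpoly.natDegree_pos hint
    have hsmonic : s.Monic := minpoly.monic hint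
    have hsirr : Irreducible s := minpoly.irreducible hint
    have hndvd : ¬ (p ∣ s.natDegree) := Nat.not_dvd_of_pos_of_lt hs0 hsdeg
    have hd0 : Polynomial.derivative s ≠ 0 := by
      intro hd
      have hcoeff : (Polynomial.derivative s).coeff (s.natDegree - 1) = 0 := by
        rw [hd, coeff_zero]
      rw [coeff_derivative] at hcoeff
      have hnd : s.natDegree - 1 + 1 = s.natDegree := Nat.succ_pred_eq_of_pos hs0
      rw [hnd] at hcoeff
      rw [hsmonic.coeff_natDegree, one_mul] at hcoeff
      have : ((s.natDegree - 1 + 1 : ℕ) : K) = 0 := by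
        push_cast
        push_cast at hcoeff
        exact hcoeff
      rw [hnd] at this
      exact hndvd ((CharP.cast_eq_zero_iff K p _).mp this)
    have hsep : s.Separable := (separable_iff_derivative_ne_zero hsirr).mpr hd0
    set sm := s.map φ with hsm
    have hsm0 : sm ≠ 0 := Polynomial.map_ne_zero (minpoly.ne_zero hint)
    have hcards : Multiset.card sm.roots = s.natDegree :=
      ((natDegree_map φ).symm.trans (IsAlgClosed.splits sm).natDegree_eq_card_roots).symm
    have hnodups : sm.roots.Nodup := nodup_roots (Polynomial.Separable.map hsep)
    set P : Kb → Prop := fun z => ∃ i₀, ∀ σ, i₀ ≤ σ → w (z - b σ) = γ σ with hP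
    set Lim : Finset Kb := sm.roots.toFinset.filter P with hLim
    have hyRs : y ∈ sm.roots := by
      rw [mem_roots hsm0, IsRoot, hsm, eval_map, ← aeval_def]
      exact minpoly.aeval K y
    have hyLim : y ∈ Lim := by
      rw [hLim, Finset.mem_filter, Multiset.mem_toFinset]
      exact ⟨hyRs, ⟨i₀y, hy⟩⟩
    set h : ℕ := Lim.card with hh
    have hh1 : 1 ≤ h := Finset.card_pos.mpr ⟨y, hyLim⟩
    have hhle : h ≤ s.natDegree := by
      calc h ≤ sm.roots.toFinset.card := Finset.card_le_card (Finset.filter_subset _ _)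
        _ ≤ Multiset.card sm.roots := Multiset.toFinset_card_le _
        _ = s.natDegree := hcards
    have hhp : h < p := lt_of_le_of_lt hhle hsdeg
    have hchar : CharP Kb p := charP_of_injective_algebraMap (algebraMap K Kb).injective p
    have hhK : (h : Kb) ≠ 0 := by
      have := @CharP.cast_eq_zero_iff Kb _ p hchar h
      intro h0
      exact Nat.not_dvd_of_pos_of_lt hh1 hhp (this.mp h0)
    set B : Kb := (h : Kb)⁻¹ * ∑ z ∈ Lim, z with hB
    -- Galois invariance of comparisons
    have hGal : ∀ τ : Kb ≃ₐ[K] Kb, ∀ u u' : Kb, w (τ u) ≤ w (τ u') ↔ w u ≤ w u' := by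
      intro τ
      have hcomp : (τ : Kb →+* Kb).comp φ = φ := by
        ext c
        exact τ.commutes c
      have h1 : ((w.comap (τ : Kb →+* Kb)).comap (algebraMap K Kb)).IsEquiv vK := by
        rw [← Valuation.comap_comp, hcomp]
        exact hAeq
      have := hhens _ _ (w.comap (τ : Kb →+* Kb)) w h1 hAeq
      intro u u'
      have h2 := this u u'
      rwa [Valuation.comap_apply, Valuation.comap_apply] at h2
    have hGal_eq : ∀ τ : Kb ≃ₐ[K] Kb, ∀ u u' : Kb, w (τ u) = w (τ u') ↔ w u = w u' := by
      intro τ u u'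
      rw [le_antisymm_iff, le_antisymm_iff, hGal τ, hGal τ]
    have hLimStable : ∀ τ : Kb ≃ₐ[K] Kb, ∀ z ∈ Lim, τ z ∈ Lim := by
      intro τ z hz
      rw [hLim, Finset.mem_filter, Multiset.mem_toFinset] at hz ⊢
      obtain ⟨hzR, i₀z, hz2⟩ := hz
      constructor
      · rw [mem_roots hsm0, IsRoot, hsm, eval_map, ← aeval_def] at hzR ⊢
        rw [show (aeval (τ z)) s = τ ((aeval z) s) from aeval_algHom_apply τ.toAlgHom z s,
          hzR, map_zero]
      · refine ⟨i₀z, fun σ hσ => ?_⟩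
        have hbfix : ∀ i : ι, τ (b i) = b i := fun i => τ.commutes (a i)
        have e1 : τ z - b σ = τ (z - b σ) := by rw [map_sub, hbfix]
        have e2 : γ σ = w (τ (b (nxt σ) - b σ)) := by
          rw [map_sub, hbfix, hbfix]
        rw [e1, e2]
        apply (hGal_eq τ _ _).mpr
        rw [hz2 σ hσ, hγdef]
    have hτB : ∀ τ : Kb ≃ₐ[K] Kb, τ B = B := by
      intro τ
      have himg : Lim.image (τ : Kb → Kb) = Lim := by
        apply Finset.eq_of_subset_of_card_le
        · intro z hz
          obtain ⟨z', hz', rfl⟩ := Finset.mem_image.mp hz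
          exact hLimStable τ z' hz'
        · rw [Finset.card_image_of_injective _ τ.injective]
      have : τ (∑ z ∈ Lim, z) = ∑ z ∈ Lim, z := by
        rw [map_sum]
        conv_rhs => rw [← himg]
        rw [Finset.sum_image (fun x _ y _ hxy => τ.injective hxy)]
      rw [hB, map_mul, map_inv₀, map_natCast, this]
    have hsepB : IsSeparable K B := by
      have hmem : B ∈ separableClosure K Kb := by
        apply mul_mem
        · apply inv_mem
          exact natCast_mem _ _
        · apply sum_mem
          intro z hz
          rw [hLim, Finset.mem_filter, Multiset.mem_toFinset] at hz
          have hzroot : (aeval z) s = 0 := by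
            have := isRoot_of_mem_roots hz.1
            rwa [IsRoot, hsm, eval_map, ← aeval_def] at this
          rw [mem_separableClosure_iff]
          have hmz : minpoly K z = s :=
            (minpoly.eq_of_irreducible_of_monic hsirr hzroot hsmonic).symm
          rw [IsSeparable, hmz]
          exact hsep
      exact mem_separableClosure_iff.mp hmem
    obtain ⟨c, hc⟩ := mem_range_of_separable_of_fixed hsepB hτB
    have hhp1 : (h : ZMod p) ≠ 0 := by
      rw [Ne, ZMod.natCast_eq_zero_iff]
      exact Nat.not_dvd_of_pos_of_lt hh1 hhp
    have hpow : (h : Kb) ^ (p - 1) = 1 := by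
      have h1 : ((h : ZMod p)) ^ (p - 1) = 1 := ZMod.pow_card_sub_one_eq_one hhp1
      have h2 := congrArg (ZMod.castHom (dvd_refl p) Kb) h1
      rw [map_pow, map_one, map_natCast] at h2
      exact h2
    have hp2 : 2 ≤ p := (Fact.out : p.Prime).two_le
    have hwh : w ((h : Kb)) = 1 := by
      apply eq_one_of_pow_eq_one (n := p - 1) (by omega : p - 1 ≠ 0)
      rw [← map_pow, hpow, map_one]
    have hwhinv : w (((h : Kb))⁻¹) = 1 := by rw [map_inv₀, hwh, inv_one]
    have hPz : ∀ z ∈ Lim, ∃ i₀, ∀ σ, i₀ ≤ σ → w (z - b σ) = γ σ :=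
      fun z hz => (Finset.mem_filter.mp hz).2
    choose! i₀L hLz using hPz
    obtain ⟨j, hj⟩ := exists_ub_finset (Lim.image i₀L)
    have hBle : ∀ σ, j ≤ σ → w (B - b σ) ≤ γ σ := by
      intro σ hσ
      have hBs : B - b σ = (h : Kb)⁻¹ * ∑ z ∈ Lim, (z - b σ) := by
        rw [Finset.sum_sub_distrib, Finset.sum_const, nsmul_eq_mul, mul_sub, ← mul_assoc,
          inv_mul_cancel₀ hhK, one_mul]
      rw [hBs, map_mul w, hwhinv, one_mul]
      apply Valuation.map_sum_le
      intro z hz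
      have hiz : i₀L z ≤ σ := le_trans (hj _ (Finset.mem_image_of_mem i₀L hz)) hσ
      rw [hLz z hz σ hiz]
    obtain ⟨i₀', hplim'⟩ :=
      plim_of_le_gamma hγ hpcb hnomax' (z := B) (i₁ := j) hBle
    apply hnolim
    refine ⟨c, i₀', fun σ τ hσ hστ => ?_⟩
    apply (hlt _ _).mp
    have e : ∀ i : ι, φ (c - a i) = B - b i := by
      intro i
      rw [map_sub, hc, hb]
    rw [e σ, e τ]
    exact hplim' σ τ hσ hστ
  · -- all roots have eventually constant distance: g has eventually constant value
    push_neg at hex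
    have hall : ∀ z ∈ gm.roots.toFinset, ∃ i₀ δ, ∀ σ, i₀ ≤ σ → w (z - b σ) = δ := by
      intro z hz
      rcases pcs_dichotomy hγ hpcb hnomax' z with ⟨i₀, hL⟩ | ⟨i₀, δ, hδ, _⟩
      · obtain ⟨σ, hσ, hne⟩ := hex z (Multiset.mem_toFinset.mp hz) i₀
        exact absurd (hL σ hσ) hne
      · exact ⟨i₀, δ, hδ⟩
    choose! i₀f δf hf using hall
    obtain ⟨j, hj⟩ := exists_ub_finset (gm.roots.toFinset.image i₀f)
    refine ⟨j, fun σ τ hσ hτ => ?_⟩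
    have hmapeq : Multiset.map (fun y => w (b σ - y)) gm.roots
        = Multiset.map (fun y => w (b τ - y)) gm.roots := by
      apply Multiset.map_congr rfl
      intro z hz
      have hzt : z ∈ gm.roots.toFinset := Multiset.mem_toFinset.mpr hz
      have hij : i₀f z ≤ j := hj _ (Finset.mem_image_of_mem i₀f hzt)
      show w (b σ - z) = w (b τ - z)
      rw [Valuation.map_sub_swap, hf z hzt σ (le_trans hij hσ),
        w.map_sub_swap, hf z hzt τ (le_trans hij hτ)]
    rw [← heq, hvale, hvale, hmapeq]
  

universe v'

/-- for a henselian field `(K,v)` of characteristic `p > 0` and a pseudo Cauchy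
sequence in `(K,v)` without pseudo limit in `K`, any valued field extension `(K(a)|K,v)` of
degree `p` in which `a` is a pseudo limit of the sequence is immediate. -/
theorem immediate_of_degree_p_pseudo_limit
    {Γ : Type*} [LinearOrderedCommGroupWithZero Γ]
    {K : Type u} {L : Type v'} [Field K] [Field L] [Algebra K L]
    (p : ℕ) [Fact p.Prime] [CharP K p]
    (v : Valuation L Γ)
    (hhens : IsHenselian (v.comap (algebraMap K L)))
    {ι : Type*} [LinearOrder ι] [Nonempty ι] (hnomax : ∀ i : ι, ∃ j, i < j)
    (a : ι → K)
    -- `(a_ν)` is a pseudo Cauchy sequence in `(K, v)`: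
    (hpc : ∀ ρ σ τ : ι, ρ < σ → σ < τ →
      (v.comap (algebraMap K L)) (a τ - a σ) < (v.comap (algebraMap K L)) (a σ - a ρ))
    -- without a pseudo limit in `K`:
    (hnolim : ¬ ∃ y : K, ∃ i₀ : ι, ∀ σ τ : ι, i₀ ≤ σ → σ < τ →
      (v.comap (algebraMap K L)) (y - a τ) < (v.comap (algebraMap K L)) (y - a σ))
    -- `L = K(x)` is an extension of degree `p`:
    (x : L) (hgen : IntermediateField.adjoin K {x} = ⊤)
    (hdeg : Module.finrank K L = p)
    -- and `x` is a pseudo limit of `(a_ν)`: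
    (hlim : ∃ i₀ : ι, ∀ σ τ : ι, i₀ ≤ σ → σ < τ →
      v (x - algebraMap K L (a τ)) < v (x - algebraMap K L (a σ))) :
    IsImmediate (algebraMap K L) v := by
  classical
  set AM : K →+* L := algebraMap K L with hAMdef
  set vK : Valuation K Γ := v.comap (algebraMap K L) with hvK
  have hAMval : ∀ u : K, v (AM u) = vK u := fun u => rfl
  have hp2 : 2 ≤ p := (Fact.out : p.Prime).two_le
  -- finite dimensionality and representation by polynomials of degree < p
  have hfd : FiniteDimensional K L :=
    FiniteDimensional.of_finrank_pos (by rw [hdeg]; exact (Fact.out : p.Prime).pos)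
  have hxint : IsIntegral K x := IsIntegral.of_finite K x
  have hmp : (minpoly K x).natDegree = p := by
    have h1 := IntermediateField.adjoin.finrank hxint
    rw [hgen, IntermediateField.finrank_top', hdeg] at h1
    exact h1.symm
  have hrep : ∀ z : L, ∃ g : Polynomial K, g.natDegree < p ∧ (Polynomial.aeval x) g = z := by
    intro z
    have hz : z ∈ IntermediateField.adjoin K {x} := by rw [hgen]; trivial
    have hz2 : z ∈ Algebra.adjoin K {x} := by
      rw [← IntermediateField.adjoin_simple_toSubalgebra_of_isAlgebraic hxint.isAlgebraic]
      exact hz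
    rw [Algebra.adjoin_singleton_eq_range_aeval] at hz2
    obtain ⟨g0, hg0⟩ := hz2
    have hmonic : (minpoly K x).Monic := minpoly.monic hxint
    have hne1 : minpoly K x ≠ 1 := by
      intro h1
      rw [h1, Polynomial.natDegree_one] at hmp
      omega
    refine ⟨g0 %ₘ (minpoly K x), ?_, ?_⟩
    · have := Polynomial.natDegree_modByMonic_lt g0 hmonic hne1
      rwa [hmp] at this
    · have hdm := Polynomial.modByMonic_add_div g0 (minpoly K x)
      have h5 : (Polynomial.aeval x) (g0 %ₘ minpoly K x + minpoly K x * (g0 /ₘ minpoly K x))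
          = (Polynomial.aeval x) g0 := by rw [hdm]
      rw [map_add, map_mul, minpoly.aeval, zero_mul, add_zero] at h5
      rw [h5]
      exact hg0
  -- gamma machinery in K
  choose nxt hnxt using hnomax
  have hnomax' : ∀ i : ι, ∃ j, i < j := fun i => ⟨nxt i, hnxt i⟩
  set γ : ι → Γ := fun σ => vK (a (nxt σ) - a σ) with hγdef
  have hγ : ∀ σ τ : ι, σ < τ → vK (a τ - a σ) = γ σ :=
    fun σ τ h => pcs_diff_stable hpc (hnxt σ) h
  have hγanti : ∀ σ τ : ι, σ < τ → γ τ < γ σ := fun σ τ h => gamma_anti hγ hpc hnomax' h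
  have hγpos : ∀ σ, 0 < γ σ := fun σ => gamma_pos hγ hpc hnomax' σ
  -- x-limit tail: relation between γ and distances to x
  obtain ⟨iX, hX⟩ := hlim
  have hγx : ∀ σ, iX ≤ σ → v (x - AM (a σ)) = γ σ := by
    intro σ hσ
    have h1 : v (x - AM (a (nxt σ))) < v (x - AM (a σ)) := hX σ (nxt σ) hσ (hnxt σ)
    have h2 : AM (a (nxt σ)) - AM (a σ) = (x - AM (a σ)) - (x - AM (a (nxt σ))) := by ring
    have h3 : vK (a (nxt σ) - a σ) = v (x - AM (a σ)) := by
      rw [← hAMval, map_sub, h2]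
      exact val_sub_left v h1
    rw [← h3, hγdef]
  -- nonvanishing along the sequence
  have hane : ∀ σ τ : ι, σ < τ → a τ - a σ ≠ 0 := by
    intro σ τ h hz
    obtain ⟨τ', hτ'⟩ := hnomax' τ
    have := hpc σ τ τ' h hτ'
    rw [hz, map_zero] at this
    simp at this
  have hainj : Function.Injective a := by
    intro σ τ h
    rcases lt_trichotomy σ τ with h1 | h1 | h1
    · exact absurd (sub_eq_zero_of_eq h.symm) (hane σ τ h1)
    · exact h1
    · exact absurd (sub_eq_zero_of_eq h) (hane τ σ h1)
  have hnonvan : ∀ g : Polynomial K, g ≠ 0 → ∃ i₀, ∀ σ, i₀ ≤ σ → g.eval (a σ) ≠ 0 := by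
    intro g hg
    have hfin : {σ : ι | g.eval (a σ) = 0}.Finite := by
      have hsub : {σ : ι | g.eval (a σ) = 0} ⊆ a ⁻¹' (g.roots.toFinset : Set K) := by
        intro σ hσ
        simp only [Set.mem_preimage, Finset.coe_sort_coe, Finset.mem_coe,
          Multiset.mem_toFinset]
        rw [Polynomial.mem_roots hg]
        exact hσ
      exact Set.Finite.subset (Set.Finite.preimage (Function.Injective.injOn hainj)
        (g.roots.toFinset.finite_toSet)) hsub
    obtain ⟨j, hj⟩ := exists_gt_finite hnomax' hfin
    exact ⟨j, fun σ hσ h0 => absurd (hj σ h0) (not_lt.mpr hσ)⟩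
  -- constant type of all polynomials of degree < p (uses henselianity)
  have hCT : ∀ g : Polynomial K, g ≠ 0 → g.natDegree < p →
      ∃ i₀ β, β ≠ 0 ∧ ∀ σ, i₀ ≤ σ → vK (g.eval (a σ)) = β := by
    intro g hg hdg
    obtain ⟨i₁, h1⟩ := crux p vK hhens hnomax' a hpc hnolim g hg hdg
    obtain ⟨i₂, h2⟩ := hnonvan g hg
    refine ⟨max i₁ i₂, vK (g.eval (a (max i₁ i₂))), ?_, ?_⟩
    · rw [ne_eq, Valuation.zero_iff]
      exact h2 _ (le_max_right _ _)
    · intro σ hσ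
      exact h1 σ (max i₁ i₂) (le_trans (le_max_left _ _) hσ) (le_max_left _ _)
  -- the key estimate
  have hEst : ∀ g : Polynomial K, g ≠ 0 → g.natDegree < p →
      ∃ c : K, v ((Polynomial.aeval x) g - AM c) < v (AM c) := by
    intro g hg hdg
    set n := g.natDegree with hn
    set D : ℕ → Polynomial K := fun k => Polynomial.hasseDeriv (k+1) g with hD
    set KS : Finset ℕ := (Finset.range n).filter (fun k => D k ≠ 0) with hKS
    have hDdeg : ∀ k, (D k).natDegree < p := by
      intro k
      have h1 : (D k).natDegree ≤ n - (k+1) := Polynomial.natDegree_hasseDeriv_le g (k+1)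
      omega
    obtain ⟨J₀, β₀, hβ₀ne, hβ₀⟩ := hCT g hg hdg
    have hKSct : ∀ k ∈ KS, ∃ i₀ β, β ≠ 0 ∧ ∀ σ, i₀ ≤ σ → vK ((D k).eval (a σ)) = β := by
      intro k hk
      exact hCT (D k) ((Finset.mem_filter.mp hk).2) (hDdeg k)
    choose! i₀f βf hβfne hβf using hKSct
    obtain ⟨J₁, hJ₁⟩ := exists_ub_finset (KS.image i₀f)
    have hi₀f : ∀ k ∈ KS, ∀ σ : ι, J₁ ≤ σ → i₀f k ≤ σ :=
      fun k hk σ hσ => le_trans (hJ₁ _ (Finset.mem_image_of_mem i₀f hk)) hσ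
    -- key ordering: each term eventually drops strictly below β₀
    have hkey : ∀ k ∈ KS, ∃ i₂, ∀ σ, i₂ ≤ σ → βf k * γ σ ^ (k+1) < β₀ := by
      intro k hk
      have hex1 : ∃ σ₁, βf k * γ σ₁ ^ (k+1) ≤ β₀ := by
        by_contra hcon
        push_neg at hcon
        -- the set of indices where two distinct terms collide is finite
        have hbad : {σ : ι | ∃ q : ℕ × ℕ, q ∈ (KS ×ˢ KS : Finset (ℕ × ℕ)) ∧ q.1 < q.2 ∧
            βf q.1 * γ σ ^ (q.1+1) = βf q.2 * γ σ ^ (q.2+1)}.Finite := by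
          have hsub : {σ : ι | ∃ q : ℕ × ℕ, q ∈ (KS ×ˢ KS : Finset (ℕ × ℕ)) ∧ q.1 < q.2 ∧
              βf q.1 * γ σ ^ (q.1+1) = βf q.2 * γ σ ^ (q.2+1)}
              ⊆ ⋃ q ∈ ((KS ×ˢ KS : Finset (ℕ × ℕ)) : Set (ℕ × ℕ)),
                {σ : ι | q.1 < q.2 ∧ βf q.1 * γ σ ^ (q.1+1) = βf q.2 * γ σ ^ (q.2+1)} := by
            intro σ hσ
            obtain ⟨q, hq, h1, h2⟩ := hσ
            exact Set.mem_biUnion hq ⟨h1, h2⟩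
          apply Set.Finite.subset _ hsub
          apply Set.Finite.biUnion ((KS ×ˢ KS).finite_toSet)
          intro q hq
          rw [Finset.mem_coe, Finset.mem_product] at hq
          apply Set.Subsingleton.finite
          intro σ hσ σ' hσ'
          obtain ⟨hqlt, he⟩ := hσ
          obtain ⟨-, he'⟩ := hσ'
          have hq1 : βf q.1 ≠ 0 := hβfne q.1 hq.1
          have hq2 : βf q.2 ≠ 0 := hβfne q.2 hq.2
          set d : ℕ := q.2 - q.1 with hd
          have hdpos : d ≠ 0 := by omega
          have hsplit : ∀ s : ι, γ s ^ (q.2+1) = γ s ^ (q.1+1) * γ s ^ d := by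
            intro s
            rw [← pow_add]
            congr 1
            omega
          have hγd : ∀ s : ι, βf q.1 * γ s ^ (q.1+1) = βf q.2 * γ s ^ (q.2+1) →
              βf q.1 = βf q.2 * γ s ^ d := by
            intro s hs
            rw [hsplit s] at hs
            have hpne : γ s ^ (q.1+1) ≠ 0 := pow_ne_zero _ (hγpos s).ne'
            apply mul_right_cancel₀ hpne
            rw [hs, mul_comm (γ s ^ (q.1+1)) (γ s ^ d), ← mul_assoc]
          have h1 := hγd σ he
          have h2 := hγd σ' he'
          have hγeq : γ σ ^ d = γ σ' ^ d := by
            apply mul_left_cancel₀ hq2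
            rw [← h1, ← h2]
          have hγeq2 : γ σ = γ σ' :=
            pow_inj_of_ne_zero hdpos (hγpos σ).ne' (hγpos σ').ne' hγeq
          rcases lt_trichotomy σ σ' with h | h | h
          · exact absurd hγeq2.symm (hγanti σ σ' h).ne
          · exact h
          · exact absurd hγeq2 (hγanti σ' σ h).ne
        obtain ⟨J₂, hJ₂⟩ := exists_gt_finite hnomax' hbad
        set σ := max (max J₀ J₁) J₂ with hσdef
        have hσJ₀ : J₀ ≤ σ := le_trans (le_max_left _ _) (le_max_left _ _)
        have hσJ₁ : J₁ ≤ σ := le_trans (le_max_right _ _) (le_max_left _ _)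
        have hσJ₂ : J₂ ≤ σ := le_max_right _ _
        have hσnotbad : ∀ q : ℕ × ℕ, q ∈ (KS ×ˢ KS : Finset (ℕ × ℕ)) → q.1 < q.2 →
            βf q.1 * γ σ ^ (q.1+1) ≠ βf q.2 * γ σ ^ (q.2+1) := by
          intro q hq h1 h2
          have : σ ∈ {σ : ι | ∃ q : ℕ × ℕ, q ∈ (KS ×ˢ KS : Finset (ℕ × ℕ)) ∧ q.1 < q.2 ∧
              βf q.1 * γ σ ^ (q.1+1) = βf q.2 * γ σ ^ (q.2+1)} := ⟨q, hq, h1, h2⟩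
          exact absurd (hJ₂ σ this) (not_lt.mpr hσJ₂)
        set τ := nxt σ with hτdef
        have hστ : σ < τ := hnxt σ
        have hτJ₀ : J₀ ≤ τ := le_trans hσJ₀ hστ.le
        -- term values
        set T : ℕ → K := fun i => (D i).eval (a σ) * (a τ - a σ) ^ (i+1) with hT
        have hterm : ∀ i ∈ KS, vK (T i) = βf i * γ σ ^ (i+1) := by
          intro i hi
          rw [hT]
          simp only
          rw [map_mul, map_pow, hβf i hi σ (hi₀f i hi σ hσJ₁), hγ σ τ hστ]
        have hKSne : KS.Nonempty := ⟨k, hk⟩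
        obtain ⟨km, hkmKS, hkmmax⟩ :=
          Finset.exists_max_image KS (fun i => βf i * γ σ ^ (i+1)) hKSne
        have hkmrange : km ∈ Finset.range n := Finset.mem_of_mem_filter km hkmKS
        have hTkm : vK (T km) = βf km * γ σ ^ (km+1) := hterm km hkmKS
        have hTkmne : vK (T km) ≠ 0 := by
          rw [hTkm]
          exact mul_ne_zero (hβfne km hkmKS) (pow_ne_zero _ (hγpos σ).ne')
        have hdom : ∀ i ∈ Finset.range n, i ≠ km → vK (T i) < vK (T km) := by
          intro i hi hikm
          by_cases hiKS : i ∈ KS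
          · rw [hterm i hiKS, hTkm]
            apply lt_of_le_of_ne (hkmmax i hiKS)
            rcases lt_trichotomy i km with h | h | h
            · exact hσnotbad (i, km) (Finset.mem_product.mpr ⟨hiKS, hkmKS⟩) h
            · exact absurd h hikm
            · intro he
              exact hσnotbad (km, i) (Finset.mem_product.mpr ⟨hkmKS, hiKS⟩) h he.symm
          · have hD0 : D i = 0 := by
              by_contra hD0
              exact hiKS (Finset.mem_filter.mpr ⟨hi, hD0⟩)
            rw [hT]
            simp only [hD0, Polynomial.eval_zero, zero_mul, map_zero]
            exact lt_of_le_of_ne zero_le' (Ne.symm hTkmne)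
        have hsum : vK (∑ i ∈ Finset.range n, T i) = vK (T km) :=
          val_sum_dominant vK hkmrange hdom
        have hub : vK (g.eval (a τ) - g.eval (a σ)) ≤ β₀ := by
          have hub' := vK.map_sub (g.eval (a τ)) (g.eval (a σ))
          rw [hβ₀ τ hτJ₀, hβ₀ σ hσJ₀] at hub'
          simpa using hub'
        rw [taylor_diff g (a τ) (a σ)] at hub
        have hTsum : ∑ i ∈ Finset.range g.natDegree,
            (Polynomial.hasseDeriv (i+1) g).eval (a σ) * (a τ - a σ) ^ (i+1)
            = ∑ i ∈ Finset.range n, T i := rfl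
        rw [hTsum, hsum, hTkm] at hub
        have hlb : β₀ < βf km * γ σ ^ (km+1) :=
          lt_of_lt_of_le (hcon σ) (hkmmax k hk)
        exact absurd hub (not_le.mpr hlb)
      obtain ⟨σ₁, hσ₁⟩ := hex1
      obtain ⟨i₂, hi₂⟩ := hnomax' σ₁
      refine ⟨i₂, fun σ hσ => ?_⟩
      have hγlt : γ σ < γ σ₁ := hγanti σ₁ σ (lt_of_lt_of_le hi₂ hσ)
      calc βf k * γ σ ^ (k+1) < βf k * γ σ₁ ^ (k+1) := by
            refine mul_lt_mul_of_pos_left ?_ (zero_lt_iff.mpr (hβfne k hk))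
            exact pow_lt_pow_left₀ hγlt zero_le' (by omega)
        _ ≤ β₀ := hσ₁
    choose! i₂f hi₂f using hkey
    obtain ⟨J₃, hJ₃⟩ := exists_ub_finset (KS.image i₂f)
    set σs := max (max J₀ iX) (max J₁ J₃) with hσs
    have hσsJ₀ : J₀ ≤ σs := le_trans (le_max_left _ _) (le_max_left _ _)
    have hσsiX : iX ≤ σs := le_trans (le_max_right _ _) (le_max_left _ _)
    have hσsJ₁ : J₁ ≤ σs := le_trans (le_max_left _ _) (le_max_right _ _)
    have hσsJ₃ : J₃ ≤ σs := le_trans (le_max_right _ _) (le_max_right _ _)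
    refine ⟨g.eval (a σs), ?_⟩
    have hident : (Polynomial.aeval x) g - AM (g.eval (a σs)) = ∑ k ∈ Finset.range n,
        AM ((D k).eval (a σs)) * (x - AM (a σs)) ^ (k+1) := by
      rw [Polynomial.aeval_def]
      exact taylor_diff_map AM g x (a σs)
    have hvAM : v (AM (g.eval (a σs))) = β₀ := by
      rw [hAMval]
      exact hβ₀ σs hσsJ₀
    rw [hident, hvAM]
    apply Valuation.map_sum_lt _ hβ₀ne
    intro k hk
    by_cases hkKS : k ∈ KS
    · have hval : v (AM ((D k).eval (a σs)) * (x - AM (a σs)) ^ (k+1))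
          = βf k * γ σs ^ (k+1) := by
        rw [map_mul, map_pow, hAMval, hβf k hkKS σs (hi₀f k hkKS σs hσsJ₁),
          hγx σs hσsiX]
      rw [hval]
      exact hi₂f k hkKS σs (le_trans (hJ₃ _ (Finset.mem_image_of_mem i₂f hkKS)) hσsJ₃)
    · have hD0 : D k = 0 := by
        by_contra hD0
        exact hkKS (Finset.mem_filter.mpr ⟨hk, hD0⟩)
      rw [hD0]
      simp only [Polynomial.eval_zero, map_zero, zero_mul]
      exact zero_lt_iff.mpr hβ₀ne
  -- assemble immediacy
  constructor
  · intro z hz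
    obtain ⟨g, hdg, hgz⟩ := hrep z
    have hg0 : g ≠ 0 := by
      rintro rfl
      rw [map_zero] at hgz
      exact hz hgz.symm
    obtain ⟨c, hest⟩ := hEst g hg0 hdg
    rw [hgz] at hest
    refine ⟨c, ?_⟩
    rw [show z = (z - AM c) + AM c by ring, v.map_add_of_distinct_val hest.ne,
      sup_eq_right.mpr hest.le]
  · intro z hz1
    obtain ⟨g, hdg, hgz⟩ := hrep z
    by_cases hg0 : g = 0
    · refine ⟨0, ?_⟩
      rw [map_zero, sub_zero, ← hgz, hg0, map_zero, Valuation.map_zero]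
      exact zero_lt_one
    obtain ⟨c, hest⟩ := hEst g hg0 hdg
    rw [hgz] at hest
    refine ⟨c, ?_⟩
    have hvz : v z = v (AM c) := by
      rw [show z = (z - AM c) + AM c by ring, v.map_add_of_distinct_val hest.ne,
        sup_eq_right.mpr hest.le]
    exact lt_of_lt_of_le hest (hvz ▸ hz1)

end ValuedExt
end
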